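/- arXiv:alg-geom/9401009 — 3 statements merged into one kernel-verified Lean document; each statement's English description precedes it below -/
import Mathlib

section
/- Let J ⊆ R = ℂ[x₁,x₂,x₃] be a homogeneous ideal such that gin(J) contains a power of x₁ and a power of x₂. Set s = min{a : x₁^a ∈ gin(J)} and ν_a = min{b : x₁^a x₂^b ∈ gin(J)} for 0 ≤ a ≤ s. Suppose 0 ≤ i < s − 1 and ν_{i+1} + 2 < ν_i. Let K ⊆ J be the ideal generated by all elements of J of degree ≤ i + ν_{i+1} + 2. Then every monomial in gin(K) is divisible by x₁^{i+1}. -/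
open MvPolynomial

noncomputable section

/-- Total degree of an exponent vector. -/
def edeg {m : ℕ} (A : Fin m →₀ ℕ) : ℕ := A.sum fun _ v => v

/-- `DRLlt A B` means `A ≺ B` in the degree reverse lexicographic order:
larger total degree is larger; among monomials of equal total degree,
`x^A ≻ x^B` iff the last nonzero entry of `A - B` is negative. -/
def DRLlt {m : ℕ} (A B : Fin m →₀ ℕ) : Prop :=
  edeg A < edeg B ∨
    (edeg A = edeg B ∧ ∃ k : Fin m, (∀ l, k < l → A l = B l) ∧ B k < A k)

/-- `μ` is the leading monomial (w.r.t. degrevlex) of the polynomial `f`. -/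
def IsLeadMonOf {m : ℕ} (μ : Fin m →₀ ℕ) (f : MvPolynomial (Fin m) ℂ) : Prop :=
  μ ∈ f.support ∧ ∀ ν ∈ f.support, ν ≠ μ → DRLlt ν μ

/-- The initial ideal of `I`: the monomial ideal generated by the degrevlex leading
monomials of the nonzero elements of `I`. -/
def initialIdeal {m : ℕ} (I : Ideal (MvPolynomial (Fin m) ℂ)) :
    Ideal (MvPolynomial (Fin m) ℂ) :=
  Ideal.span {p | ∃ μ f, f ∈ I ∧ IsLeadMonOf μ f ∧ p = monomial μ (1 : ℂ)}

/-- The monomial with exponent vector `μ` belongs to the ideal `J`. -/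
def monomialMem {m : ℕ} (μ : Fin m →₀ ℕ) (J : Ideal (MvPolynomial (Fin m) ℂ)) : Prop :=
  monomial μ (1 : ℂ) ∈ J

/-- `J` is a monomial ideal. -/
def IsMonomialIdeal {m : ℕ} (J : Ideal (MvPolynomial (Fin m) ℂ)) : Prop :=
  ∃ T : Set (Fin m →₀ ℕ), J = Ideal.span ((fun μ => monomial μ (1 : ℂ)) '' T)

/-- `J` is a Borel-fixed monomial ideal: for every monomial `x^A ∈ J` and every pair of
adjacent indices `k, l = k+1` with `A l > 0`, the monomial `x_k · x^A / x_l` is in `J`. -/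
def IsBorelFixed {m : ℕ} (J : Ideal (MvPolynomial (Fin m) ℂ)) : Prop :=
  IsMonomialIdeal J ∧
    ∀ A : Fin m →₀ ℕ, monomialMem A J → ∀ k l : Fin m, (k : ℕ) + 1 = (l : ℕ) →
      0 < A l → monomialMem (A + Finsupp.single k 1 - Finsupp.single l 1) J

/-- The image `g·I` of the ideal `I` under the algebra automorphism sending
`xᵢ` to `Σⱼ gᵢⱼ xⱼ`. -/
def matAct {m : ℕ} (g : Matrix (Fin m) (Fin m) ℂ) (I : Ideal (MvPolynomial (Fin m) ℂ)) :
    Ideal (MvPolynomial (Fin m) ℂ) :=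
  Ideal.map (MvPolynomial.aeval (fun i => ∑ j, MvPolynomial.C (g i j) * X j) :
      MvPolynomial (Fin m) ℂ →ₐ[ℂ] MvPolynomial (Fin m) ℂ) I

/-- `G` is the generic initial ideal of `I` (Galligo): `G` is a Borel-fixed monomial ideal
and there is a nonzero polynomial `P` in the matrix entries such that `in(g·I) = G`
whenever `g` is invertible and `P(g) ≠ 0`. -/
def IsGinOf {m : ℕ} (I G : Ideal (MvPolynomial (Fin m) ℂ)) : Prop :=
  IsBorelFixed G ∧
    ∃ P : MvPolynomial (Fin m × Fin m) ℂ, P ≠ 0 ∧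
      ∀ g : Matrix (Fin m) (Fin m) ℂ, IsUnit g.det →
        MvPolynomial.eval (fun p => g p.1 p.2) P ≠ 0 → initialIdeal (matAct g I) = G

/-- A homogeneous ideal (contains all homogeneous components of its members). -/
def IsHomogIdeal {m : ℕ} (I : Ideal (MvPolynomial (Fin m) ℂ)) : Prop :=
  ∀ f ∈ I, ∀ n : ℕ, MvPolynomial.homogeneousComponent n f ∈ I

/-- The homogeneous ideal of a reduced, irreducible, nondegenerate curve in ℙ³:
a homogeneous prime ideal containing no nonzero linear form, with
`dim S/I_C = 2`. -/
def IsCurveIdeal (I : Ideal (MvPolynomial (Fin 4) ℂ)) : Prop :=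
  IsHomogIdeal I ∧ I.IsPrime ∧ (∀ f ∈ I, f.IsHomogeneous 1 → f = 0) ∧
    ringKrullDim (MvPolynomial (Fin 4) ℂ ⧸ I) = 2

/-- `f(i,j) = min{k : x₁^i x₂^j x₃^k ∈ G} ∈ ℕ ∪ {∞}`. -/
def finv (G : Ideal (MvPolynomial (Fin 4) ℂ)) (i j : ℕ) : ℕ∞ :=
  sInf ((fun k : ℕ => (k : ℕ∞)) ''
    {k : ℕ | monomialMem (Finsupp.single 0 i + Finsupp.single 1 j + Finsupp.single 2 k) G})

/-- `s_k = min{i : f(i,0) ≤ k}`. -/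
def sK (G : Ideal (MvPolynomial (Fin 4) ℂ)) (k : ℕ) : ℕ :=
  sInf {i : ℕ | finv G i 0 ≤ (k : ℕ∞)}

/-- `μ_i(k) = min{j : f(i,j) ≤ k}`, the invariants of the curve. -/
def muInv (G : Ideal (MvPolynomial (Fin 4) ℂ)) (i k : ℕ) : ℕ :=
  sInf {j : ℕ | finv G i j ≤ (k : ℕ∞)}


/-!
Pick a matrix `g` generic for both `J` and `K`, so that `in(g·J) = G` and `in(g·K) = GK`, and put
`d = i + ν_{i+1} + 2`. Borel-fixedness makes `a ↦ ν_a` strictly decreasing for `a < s`, so the gap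
`ν_{i+1} + 2 < ν_i` gives `a + ν_a > d` for all `a ≤ i`: every monomial of `G` of degree `≤ d` is
divisible by `x₁^{i+1}`. Since `g·K` is generated by the elements of `g·J` of degree `≤ d`, the
same holds for `GK` in degrees `≤ d`, and `x₁^{i+1} x₂^{ν_{i+1}} ∈ GK`.

Let `V_e` be the degree `e` part of the image of `g·K` in `ℂ[x₁, x₂] = R/(x₃)`. For degrevlex a
leading monomial is `x₃`-free as soon as some term is, so `dim V_e` is governed by the
`x₃`-free monomials of `GK`: it is at most `e - i` for `e ≤ d`, at least `ν_{i+1} + 1 = d - 1 - i`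
for `e = d - 1`, and at least `b + 1` whenever `x₁^{e-b} x₂^b ∈ GK`. As `g·K` is generated in
degrees `≤ d`, `V_{e+1} = x₁V_e + x₂V_e` for `e ≥ d`, and `x₁x₂V_{e-1} ⊆ x₁V_e ∩ x₂V_e` makes
`e ↦ dim V_e` concave from `d - 1` on; hence `dim V_e ≤ e - i` for all `e`. A monomial of `GK`
with `x₁`-exponent `a ≤ i` would, after moving its `x₃`-part to `x₂`, force `dim V_e ≥ e - a + 1`.
-/

lemma le_add_of_concave {r : ℕ → ℕ} (h : ∀ k, r (k + 2) + r k ≤ 2 * r (k + 1))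
    (h1 : r 1 ≤ r 0 + 1) (k : ℕ) : r k ≤ r 0 + k := by
  have hstep : ∀ k, r (k + 1) ≤ r k + 1 := by
    intro k
    induction k with
    | zero => exact h1
    | succ k ih =>
      have : r (k + 1 + 1) + r k ≤ 2 * r (k + 1) := h k
      omega
  induction k with
  | zero => rfl
  | succ k ih => have := hstep k; omega

lemma add_le_add_of_forall_succ_lt {f : ℕ → ℕ} {n : ℕ} (h : ∀ a < n, f (a + 1) < f a)
    {a : ℕ} (ha : a ≤ n) : f n + n ≤ f a + a := by
  induction n with
  | zero => obtain rfl := Nat.le_zero.mp ha; rfl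
  | succ n ih =>
    rcases Nat.of_le_succ ha with ha | rfl
    · have := ih (fun b hb => h b (by omega)) ha
      have := h n (by omega)
      omega
    · rfl

section Degrevlex

variable {m : ℕ}

lemma edeg_add (A B : Fin m →₀ ℕ) : edeg (A + B) = edeg A + edeg B :=
  map_add Finsupp.degree A B

lemma DRLlt.add_right {A B : Fin m →₀ ℕ} (h : DRLlt A B) (C : Fin m →₀ ℕ) :
    DRLlt (A + C) (B + C) := by
  simp only [DRLlt, edeg_add, Finsupp.add_apply] at h ⊢
  rcases h with h | ⟨he, k, hk, hlt⟩
  · exact .inl (by omega)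
  · exact .inr ⟨by omega, k, fun l hl => by rw [hk l hl], by omega⟩

lemma edeg_eq_of_mem_support {f : MvPolynomial (Fin m) ℂ} {n : ℕ} (hf : f.IsHomogeneous n)
    {ν : Fin m →₀ ℕ} (hν : ν ∈ f.support) : edeg ν = n := by
  by_contra hne
  exact mem_support_iff.mp hν (hf.coeff_eq_zero hne)

lemma IsLeadMonOf.monomial_mul {f : MvPolynomial (Fin m) ℂ} {μ : Fin m →₀ ℕ}
    (h : IsLeadMonOf μ f) (τ : Fin m →₀ ℕ) :
    IsLeadMonOf (τ + μ) (monomial τ 1 * f) := by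
  classical
  refine ⟨by simpa [mem_support_iff] using h.1, fun ν hν hne => ?_⟩
  have hτ : τ ≤ ν := by
    by_contra hτ
    simp [mem_support_iff, coeff_monomial_mul', hτ] at hν
  obtain ⟨σ, rfl⟩ := exists_add_of_le hτ
  have hσ : σ ∈ f.support := by simpa [mem_support_iff] using hν
  have hσμ : σ ≠ μ := fun h' => hne (by rw [h'])
  simpa only [add_comm τ] using (h.2 σ hσ hσμ).add_right τ

lemma IsLeadMonOf.homogeneousComponent {f : MvPolynomial (Fin m) ℂ} {μ : Fin m →₀ ℕ}
    (h : IsLeadMonOf μ f) : IsLeadMonOf μ (homogeneousComponent (edeg μ) f) := by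
  classical
  simp only [IsLeadMonOf, support_homogeneousComponent, Finset.mem_filter] at h ⊢
  exact ⟨⟨h.1, rfl⟩, fun ν hν hne => h.2 ν hν.1 hne⟩

end Degrevlex

section ThreeVariables

lemma edeg_fin3 (A : Fin 3 →₀ ℕ) : edeg A = A 0 + A 1 + A 2 := by
  rw [edeg, Finsupp.sum_fintype _ _ fun _ => rfl, Fin.sum_univ_three]

lemma finsupp_fin3_eq_iff {A B : Fin 3 →₀ ℕ} : A = B ↔ A 0 = B 0 ∧ A 1 = B 1 ∧ A 2 = B 2 := by
  simp [DFunLike.ext_iff, Fin.forall_fin_succ]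

lemma DRLlt_iff_fin3 {A B : Fin 3 →₀ ℕ} :
    DRLlt A B ↔ edeg A < edeg B ∨
      edeg A = edeg B ∧ (B 2 < A 2 ∨ B 2 = A 2 ∧ B 1 < A 1) := by
  have := edeg_fin3 A
  have := edeg_fin3 B
  simp [DRLlt, Fin.exists_fin_succ, Fin.forall_fin_succ]
  omega

lemma exists_isLeadMonOf {f : MvPolynomial (Fin 3) ℂ} (hf : f ≠ 0) : ∃ μ, IsLeadMonOf μ f := by
  -- on three variables degrevlex is the lexicographic order on `(deg, -a₃, -a₂)`
  obtain ⟨μ, hμ, hmax⟩ := f.support.exists_max_image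
    (fun A => toLex (edeg A, toLex (-(A 2 : ℤ), -(A 1 : ℤ)))) (support_nonempty.mpr hf)
  refine ⟨μ, hμ, fun ν hν hne => ?_⟩
  have hνμ := hmax ν hν
  simp only [Prod.Lex.toLex_le_toLex] at hνμ
  rw [Ne, finsupp_fin3_eq_iff] at hne
  have := edeg_fin3 ν
  have := edeg_fin3 μ
  rw [DRLlt_iff_fin3]
  omega

lemma IsLeadMonOf.apply_two_eq_zero {f : MvPolynomial (Fin 3) ℂ} {n : ℕ} {μ ξ : Fin 3 →₀ ℕ}
    (h : IsLeadMonOf μ f) (hf : f.IsHomogeneous n) (hξ : ξ ∈ f.support) (hξ2 : ξ 2 = 0) :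
    μ 2 = 0 ∧ μ 1 ≤ ξ 1 := by
  rcases eq_or_ne ξ μ with rfl | hne
  · exact ⟨hξ2, le_rfl⟩
  have := DRLlt_iff_fin3.mp (h.2 ξ hξ hne)
  have := edeg_eq_of_mem_support hf hξ
  have := edeg_eq_of_mem_support hf h.1
  omega

end ThreeVariables

section InitialIdeal

variable {m : ℕ}

lemma initialIdeal_mono {I I' : Ideal (MvPolynomial (Fin m) ℂ)} (h : I ≤ I') :
    initialIdeal I ≤ initialIdeal I' :=
  Ideal.span_mono fun _ ⟨μ, f, hf, hμ, hp⟩ => ⟨μ, f, h hf, hμ, hp⟩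

lemma monomialMem.add_left {μ : Fin m →₀ ℕ} {T : Ideal (MvPolynomial (Fin m) ℂ)}
    (h : monomialMem μ T) (τ : Fin m →₀ ℕ) : monomialMem (τ + μ) T := by
  have : monomial (τ + μ) (1 : ℂ) = monomial τ 1 * monomial μ 1 := by
    rw [monomial_mul, one_mul]
  rw [monomialMem, this]
  exact T.mul_mem_left _ h

lemma monomialMem_initialIdeal_of_isLeadMonOf {I : Ideal (MvPolynomial (Fin m) ℂ)}
    {f : MvPolynomial (Fin m) ℂ} {μ : Fin m →₀ ℕ} (hf : f ∈ I) (h : IsLeadMonOf μ f) :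
    monomialMem μ (initialIdeal I) :=
  Ideal.subset_span ⟨μ, f, hf, h, rfl⟩

lemma monomialMem_initialIdeal_iff {I : Ideal (MvPolynomial (Fin m) ℂ)} {μ : Fin m →₀ ℕ} :
    monomialMem μ (initialIdeal I) ↔ ∃ κ ≤ μ, ∃ f ∈ I, IsLeadMonOf κ f := by
  have : initialIdeal I =
      Ideal.span ((fun κ => monomial κ (1 : ℂ)) '' {κ | ∃ f ∈ I, IsLeadMonOf κ f}) := by
    rw [initialIdeal]
    congr 1
    ext p
    simp only [Set.mem_image]
    aesop
  rw [monomialMem, this, mem_ideal_span_monomial_image]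
  simp only [support_monomial, one_ne_zero, if_false, Finset.mem_singleton, forall_eq]
  aesop

lemma exists_isHomogeneous_isLeadMonOf {I : Ideal (MvPolynomial (Fin m) ℂ)}
    (hI : IsHomogIdeal I) {μ : Fin m →₀ ℕ} (h : monomialMem μ (initialIdeal I)) :
    ∃ f ∈ I, f.IsHomogeneous (edeg μ) ∧ IsLeadMonOf μ f := by
  obtain ⟨κ, hκμ, f, hf, hκ⟩ := monomialMem_initialIdeal_iff.mp h
  obtain ⟨τ, rfl⟩ := exists_add_of_le hκμ
  rw [add_comm κ τ, edeg_add]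
  exact ⟨_, I.mul_mem_left (monomial τ 1) (hI f hf (edeg κ)),
    (isHomogeneous_monomial _ rfl).mul (homogeneousComponent_isHomogeneous _ _),
    hκ.homogeneousComponent.monomial_mul τ⟩

end InitialIdeal

section Borel

/-- The exponent vector of `x₁ᵃ x₂ᵇ x₃ᶜ`. -/
def mono3 (a b c : ℕ) : Fin 3 →₀ ℕ :=
  Finsupp.single 0 a + Finsupp.single 1 b + Finsupp.single 2 c

@[simp] lemma mono3_apply_zero (a b c : ℕ) : mono3 a b c 0 = a := by simp [mono3]
@[simp] lemma mono3_apply_one (a b c : ℕ) : mono3 a b c 1 = b := by simp [mono3]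
@[simp] lemma mono3_apply_two (a b c : ℕ) : mono3 a b c 2 = c := by simp [mono3]

@[simp] lemma edeg_mono3 (a b c : ℕ) : edeg (mono3 a b c) = a + b + c := by
  simp [edeg_fin3]

lemma mono3_apply_self (μ : Fin 3 →₀ ℕ) : mono3 (μ 0) (μ 1) (μ 2) = μ := by
  simp [finsupp_fin3_eq_iff]

variable {T : Ideal (MvPolynomial (Fin 3) ℂ)}

lemma IsBorelFixed.mono3_shift_21 (hB : IsBorelFixed T) {a b c : ℕ}
    (h : monomialMem (mono3 a b c) T) : monomialMem (mono3 a (b + c) 0) T := by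
  induction c generalizing b with
  | zero => simpa using h
  | succ c ih =>
    have := hB.2 _ h 1 2 rfl (by simp)
    rw [show mono3 a b (c + 1) + Finsupp.single 1 1 - Finsupp.single 2 1 = mono3 a (b + 1) c by
      simp [finsupp_fin3_eq_iff]] at this
    rw [show b + (c + 1) = b + 1 + c by omega]
    exact ih this

lemma IsBorelFixed.mono3_shift_10 (hB : IsBorelFixed T) {a b j : ℕ}
    (h : monomialMem (mono3 a (b + j) 0) T) : monomialMem (mono3 (a + j) b 0) T := by
  induction j generalizing a with
  | zero => simpa using h
  | succ j ih =>
    have := hB.2 _ h 0 1 rfl (by simp)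
    rw [show mono3 a (b + (j + 1)) 0 + Finsupp.single 0 1 - Finsupp.single 1 1 =
      mono3 (a + 1) (b + j) 0 by simp [finsupp_fin3_eq_iff]] at this
    rw [show a + (j + 1) = a + 1 + j by omega]
    exact ih this

lemma isLeast_sInf_monomialMem {G : Ideal (MvPolynomial (Fin 3) ℂ)}
    (h : ∃ b, monomialMem (Finsupp.single 1 b) G) (a : ℕ) :
    IsLeast {b | monomialMem (mono3 a b 0) G}
      (sInf {b | monomialMem (Finsupp.single 0 a + Finsupp.single 1 b) G}) := by
  obtain ⟨b, hb⟩ := h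
  simp only [mono3, Finsupp.single_zero, add_zero]
  exact ⟨Nat.sInf_mem ⟨b, hb.add_left _⟩, fun _ hb' => Nat.sInf_le hb'⟩

lemma IsBorelFixed.le_apply_zero_of_edeg_le {G : Ideal (MvPolynomial (Fin 3) ℂ)}
    (hB : IsBorelFixed G) {s i : ℕ} {ν : ℕ → ℕ}
    (hs : ∀ a < s, ¬ monomialMem (mono3 a 0 0) G)
    (hν : ∀ a, IsLeast {b | monomialMem (mono3 a b 0) G} (ν a))
    (hi : i + 1 < s) (hgap : ν (i + 1) + 2 < ν i) {μ : Fin 3 →₀ ℕ} (hμ : monomialMem μ G)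
    (hdeg : edeg μ ≤ i + ν (i + 1) + 2) : i + 1 ≤ μ 0 := by
  have hstep : ∀ a < s, ν (a + 1) < ν a := by
    intro a ha
    have hmem : monomialMem (mono3 a (ν a) 0) G := (hν a).1
    obtain ⟨b, hb⟩ : ∃ b, ν a = b + 1 := Nat.exists_eq_succ_of_ne_zero fun h0 => by
      rw [h0] at hmem
      exact hs a ha hmem
    rw [hb] at hmem
    have := (hν (a + 1)).2 (hB.mono3_shift_10 (j := 1) hmem)
    omega
  by_contra! hμ0
  have hνμ := (hν (μ 0)).2 (hB.mono3_shift_21 (by rwa [mono3_apply_self]))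
  have := add_le_add_of_forall_succ_lt (fun a ha => hstep a (by omega)) (Nat.lt_succ_iff.mp hμ0)
  rw [edeg_fin3] at hdeg
  omega

end Borel

section LinearSubstitution

variable {m : ℕ}

def linSubst (g : Matrix (Fin m) (Fin m) ℂ) :
    MvPolynomial (Fin m) ℂ →ₐ[ℂ] MvPolynomial (Fin m) ℂ :=
  aeval fun i => ∑ j, C (g i j) * X j

lemma matAct_eq_map (g : Matrix (Fin m) (Fin m) ℂ) (I : Ideal (MvPolynomial (Fin m) ℂ)) :
    matAct g I = I.map (linSubst g) := rfl

lemma linSubst_comp (g h : Matrix (Fin m) (Fin m) ℂ) :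
    (linSubst g).comp (linSubst h) = linSubst (h * g) := by
  refine algHom_ext fun i => ?_
  simp only [linSubst, AlgHom.comp_apply, aeval_X, map_sum, map_mul, aeval_C, algebraMap_eq,
    Matrix.mul_apply, Finset.mul_sum, Finset.sum_mul, mul_assoc]
  exact Finset.sum_comm

lemma linSubst_one : linSubst (1 : Matrix (Fin m) (Fin m) ℂ) = AlgHom.id ℂ _ := by
  refine algHom_ext fun i => ?_
  simp [linSubst, Matrix.one_apply]

lemma linSubst_inv_linSubst {g : Matrix (Fin m) (Fin m) ℂ} (hg : IsUnit g.det)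
    (p : MvPolynomial (Fin m) ℂ) : linSubst g⁻¹ (linSubst g p) = p := by
  rw [← AlgHom.comp_apply, linSubst_comp, Matrix.mul_nonsing_inv g hg, linSubst_one]
  rfl

lemma linSubst_surjective {g : Matrix (Fin m) (Fin m) ℂ} (hg : IsUnit g.det) :
    Function.Surjective (linSubst g) := fun p =>
  ⟨linSubst g⁻¹ p, by
    rw [← AlgHom.comp_apply, linSubst_comp, Matrix.nonsing_inv_mul g hg, linSubst_one]
    rfl⟩

lemma isHomogeneous_linSubst {p : MvPolynomial (Fin m) ℂ} {n : ℕ} (hp : p.IsHomogeneous n)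
    (g : Matrix (Fin m) (Fin m) ℂ) : (linSubst g p).IsHomogeneous n := by
  have h := hp.aeval (fun i => ∑ j, C (g i j) * X j) fun i =>
    IsHomogeneous.sum _ _ _ fun j _ => isHomogeneous_C_mul_X (g i j) j
  rw [one_mul] at h
  exact h

lemma homogeneousComponent_linSubst (g : Matrix (Fin m) (Fin m) ℂ) (n : ℕ)
    (p : MvPolynomial (Fin m) ℂ) :
    homogeneousComponent n (linSubst g p) = linSubst g (homogeneousComponent n p) := by
  conv_lhs => rw [← sum_homogeneousComponent p]
  simp_rw [map_sum, homogeneousComponent_of_mem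
    (isHomogeneous_linSubst (homogeneousComponent_isHomogeneous _ p) g), Finset.sum_ite_eq]
  split_ifs with h
  · rfl
  · rw [homogeneousComponent_eq_zero _ _ (by simpa using h), map_zero]

lemma IsHomogIdeal.matAct {J : Ideal (MvPolynomial (Fin m) ℂ)} (hJ : IsHomogIdeal J)
    {g : Matrix (Fin m) (Fin m) ℂ} (hg : IsUnit g.det) : IsHomogIdeal (matAct g J) := by
  intro f hf n
  obtain ⟨p, hp, rfl⟩ := (Ideal.mem_map_iff_of_surjective _ (linSubst_surjective hg)).mp hf
  rw [homogeneousComponent_linSubst]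
  exact Ideal.mem_map_of_mem _ (hJ p hp n)

lemma exists_isUnit_det_initialIdeal_matAct_eq {I I' G G' : Ideal (MvPolynomial (Fin m) ℂ)}
    (hG : IsGinOf I G) (hG' : IsGinOf I' G') :
    ∃ g : Matrix (Fin m) (Fin m) ℂ, IsUnit g.det ∧
      initialIdeal (matAct g I) = G ∧ initialIdeal (matAct g I') = G' := by
  obtain ⟨-, P, hP, hPG⟩ := hG
  obtain ⟨-, P', hP', hPG'⟩ := hG'
  have hne : P * P' * (Matrix.mvPolynomialX (Fin m) (Fin m) ℂ).det ≠ 0 :=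
    mul_ne_zero (mul_ne_zero hP hP') (Matrix.det_mvPolynomialX_ne_zero _ _)
  obtain ⟨x, hx⟩ : ∃ x, eval x (P * P' * (Matrix.mvPolynomialX (Fin m) (Fin m) ℂ).det) ≠ 0 := by
    by_contra! h
    exact hne (MvPolynomial.funext fun x => by simp [h x])
  simp only [map_mul, Matrix.eval_det_mvPolynomialX, ne_eq, mul_eq_zero, not_or] at hx
  obtain ⟨⟨hxP, hxP'⟩, hdet⟩ := hx
  exact ⟨_, isUnit_iff_ne_zero.mpr hdet, hPG _ (isUnit_iff_ne_zero.mpr hdet) hxP,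
    hPG' _ (isUnit_iff_ne_zero.mpr hdet) hxP'⟩

end LinearSubstitution

lemma homogeneousComponent_mul_of_isHomogeneous {σ R : Type*} [CommSemiring R]
    {r t : MvPolynomial σ R} {n : ℕ} (ht : t.IsHomogeneous n) (e : ℕ) :
    homogeneousComponent e (r * t) =
      if n ≤ e then homogeneousComponent (e - n) r * t else 0 := by
  conv_lhs => rw [← sum_homogeneousComponent r, Finset.sum_mul, map_sum]
  simp_rw [homogeneousComponent_of_mem ((homogeneousComponent_isHomogeneous _ r).mul ht)]
  split_ifs with h
  · rw [Finset.sum_eq_single (e - n) (fun k _ hk => if_neg (by omega)) fun hk => ?_,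
      if_pos (by omega)]
    simp only [Finset.mem_range, not_lt] at hk
    rw [if_pos (by omega), homogeneousComponent_eq_zero _ _ (by omega), zero_mul]
  · exact Finset.sum_eq_zero fun k _ => if_neg (by omega)

section Truncation

variable {m : ℕ}

lemma isHomogIdeal_span {T : Set (MvPolynomial (Fin m) ℂ)}
    (hT : ∀ t ∈ T, ∃ n, t.IsHomogeneous n) : IsHomogIdeal (Ideal.span T) := by
  let _ := gradedAlgebra (σ := Fin m) (R := ℂ)
  exact fun f hf n => homogeneousComponent_mem_of_mem (Ideal.homogeneous_span _ T hT) hf n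

def spanDegLE (I : Ideal (MvPolynomial (Fin m) ℂ)) (d : ℕ) : Ideal (MvPolynomial (Fin m) ℂ) :=
  Ideal.span {f | f ∈ I ∧ ∃ n ≤ d, f.IsHomogeneous n}

lemma spanDegLE_le (I : Ideal (MvPolynomial (Fin m) ℂ)) (d : ℕ) : spanDegLE I d ≤ I :=
  Ideal.span_le.mpr fun _ hf => hf.1

lemma isHomogIdeal_spanDegLE (I : Ideal (MvPolynomial (Fin m) ℂ)) (d : ℕ) :
    IsHomogIdeal (spanDegLE I d) :=
  isHomogIdeal_span fun _ ⟨_, n, _, hn⟩ => ⟨n, hn⟩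

lemma monomialMem_initialIdeal_spanDegLE {I : Ideal (MvPolynomial (Fin m) ℂ)}
    (hI : IsHomogIdeal I) {μ : Fin m →₀ ℕ} {d : ℕ} (h : monomialMem μ (initialIdeal I))
    (hμ : edeg μ ≤ d) : monomialMem μ (initialIdeal (spanDegLE I d)) := by
  obtain ⟨f, hf, hfμ, hμf⟩ := exists_isHomogeneous_isLeadMonOf hI h
  exact monomialMem_initialIdeal_of_isLeadMonOf (Ideal.subset_span ⟨hf, _, hμ, hfμ⟩) hμf

lemma span_totalDegree_le_eq_spanDegLE {J : Ideal (MvPolynomial (Fin m) ℂ)}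
    (hJ : IsHomogIdeal J) (d : ℕ) :
    Ideal.span {f | f ∈ J ∧ f.totalDegree ≤ d} = spanDegLE J d := by
  rw [spanDegLE]
  apply le_antisymm <;> rw [Ideal.span_le]
  · rintro f ⟨hfJ, hfd⟩
    rw [SetLike.mem_coe, ← sum_homogeneousComponent f]
    refine Ideal.sum_mem _ fun k hk => Ideal.subset_span
      ⟨hJ f hfJ k, k, ?_, homogeneousComponent_isHomogeneous k f⟩
    simp only [Finset.mem_range] at hk
    omega
  · rintro f ⟨hfJ, n, hnd, hfn⟩
    exact Ideal.subset_span ⟨hfJ, hfn.totalDegree_le.trans hnd⟩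

lemma matAct_spanDegLE {g : Matrix (Fin m) (Fin m) ℂ} (hg : IsUnit g.det)
    (J : Ideal (MvPolynomial (Fin m) ℂ)) (d : ℕ) :
    matAct g (spanDegLE J d) = spanDegLE (matAct g J) d := by
  rw [matAct_eq_map, spanDegLE, Ideal.map_span, spanDegLE]
  congr 1
  ext f
  constructor
  · rintro ⟨p, ⟨hpJ, n, hnd, hpn⟩, rfl⟩
    exact ⟨Ideal.mem_map_of_mem _ hpJ, n, hnd, isHomogeneous_linSubst hpn g⟩
  · rintro ⟨hf, n, hnd, hfn⟩
    obtain ⟨p, hp, rfl⟩ := (Ideal.mem_map_iff_of_surjective _ (linSubst_surjective hg)).mp hf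
    have hpn := isHomogeneous_linSubst hfn g⁻¹
    rw [linSubst_inv_linSubst hg] at hpn
    exact ⟨p, ⟨hp, n, hnd, hpn⟩, rfl⟩

def gradedPiece (N : Ideal (MvPolynomial (Fin m) ℂ)) (e : ℕ) :
    Submodule ℂ (MvPolynomial (Fin m) ℂ) :=
  N.restrictScalars ℂ ⊓ homogeneousSubmodule (Fin m) ℂ e

lemma mul_mem_homogeneousSubmodule_one_mul_gradedPiece {N : Ideal (MvPolynomial (Fin m) ℂ)}
    {t q : MvPolynomial (Fin m) ℂ} {n k : ℕ} (ht : t ∈ N) (htn : t.IsHomogeneous n)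
    (hq : q.IsHomogeneous (k + 1)) :
    q * t ∈ homogeneousSubmodule (Fin m) ℂ 1 * gradedPiece N (k + n) := by
  rw [← mem_homogeneousSubmodule, ← homogeneousSubmodule_one_pow, pow_succ',
    homogeneousSubmodule_one_pow] at hq
  refine Submodule.mul_induction_on (C := fun q => q * t ∈ _) hq (fun a ha b hb => ?_)
    fun x y hx hy => by simpa only [add_mul] using add_mem hx hy
  rw [mul_assoc]
  exact Submodule.mul_mem_mul ha ⟨N.mul_mem_left b ht, IsHomogeneous.mul hb htn⟩

lemma gradedPiece_span_succ_le {T : Set (MvPolynomial (Fin m) ℂ)} {e : ℕ}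
    (hT : ∀ t ∈ T, ∃ n ≤ e, t.IsHomogeneous n) :
    gradedPiece (Ideal.span T) (e + 1) ≤
      homogeneousSubmodule (Fin m) ℂ 1 * gradedPiece (Ideal.span T) e := by
  rintro f ⟨hf, hfe⟩
  obtain ⟨k, c, t, rfl⟩ := Submodule.mem_span_set'.mp hf
  rw [← homogeneousComponent_eq_self hfe, map_sum]
  refine Submodule.sum_mem _ fun j _ => ?_
  obtain ⟨n, hne, htn⟩ := hT _ (t j).2
  obtain ⟨k, rfl⟩ : ∃ k, e = k + n := ⟨e - n, by omega⟩
  rw [smul_eq_mul, homogeneousComponent_mul_of_isHomogeneous htn, if_pos (by omega),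
    show k + n + 1 - n = k + 1 by omega]
  exact mul_mem_homogeneousSubmodule_one_mul_gradedPiece (Ideal.subset_span (t j).2) htn
    (homogeneousComponent_isHomogeneous _ _)

end Truncation

section LinearAlgebra

variable {K V : Type*} [Field K] [AddCommGroup V] [Module K V]

lemma linearIndependent_of_triangular {ι : Type*} [Fintype ι] [LinearOrder ι] {v : ι → V}
    (φ : ι → V →ₗ[K] K) (hdiag : ∀ i, φ i (v i) ≠ 0) (htri : ∀ i j, i < j → φ i (v j) = 0) :
    LinearIndependent K v := by
  classical
  refine LinearIndependent.of_comp (LinearMap.pi φ) ?_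
  have hA : (Matrix.of fun j i => φ i (v j)).det ≠ 0 := by
    rw [Matrix.det_of_isUpperTriangular (M := Matrix.of fun j i => φ i (v j))
      fun j i hij => htri i j hij]
    exact Finset.prod_ne_zero_iff.mpr fun i _ => hdiag i
  exact Matrix.linearIndependent_rows_of_det_ne_zero hA

lemma finrank_add_finrank_le_of_le_sup_map {u v : V →ₗ[K] V} (hu : Function.Injective u)
    (hv : Function.Injective v) (huv : u ∘ₗ v = v ∘ₗ u) {A B C : Submodule K V}
    [FiniteDimensional K B] (hA : A ≤ B.map u ⊔ B.map v) (hCu : C.map u ≤ B)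
    (hCv : C.map v ≤ B) :
    Module.finrank K A + Module.finrank K C ≤ 2 * Module.finrank K B := by
  have hC : C.map (u ∘ₗ v) ≤ B.map u ⊓ B.map v := by
    rintro _ ⟨c, hc, rfl⟩
    exact ⟨⟨v c, hCv ⟨c, hc, rfl⟩, rfl⟩, ⟨u c, hCu ⟨c, hc, rfl⟩, by rw [huv]; rfl⟩⟩
  have hsup := Submodule.finrank_sup_add_finrank_inf_eq (B.map u) (B.map v)
  have hAle := Submodule.finrank_mono hA
  have hCle := Submodule.finrank_mono hC
  rw [← (Submodule.equivMapOfInjective (u ∘ₗ v) (hu.comp hv) C).finrank_eq] at hCle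
  rw [← (Submodule.equivMapOfInjective _ hu B).finrank_eq,
    ← (Submodule.equivMapOfInjective _ hv B).finrank_eq] at hsup
  omega

end LinearAlgebra


section HyperplaneSection

def evalX3Zero : MvPolynomial (Fin 3) ℂ →ₐ[ℂ] MvPolynomial (Fin 3) ℂ :=
  aeval fun j => if j = 2 then 0 else X j

lemma evalX3Zero_X {j : Fin 3} : evalX3Zero (X j) = if j = 2 then 0 else X j := by
  simp [evalX3Zero]

lemma evalX3Zero_monomial (u : Fin 3 →₀ ℕ) (c : ℂ) :
    evalX3Zero (monomial u c) = if u 2 = 0 then monomial u c else 0 := by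
  rw [evalX3Zero, aeval_monomial, monomial_eq]
  split_ifs with hu
  · congr 1
    refine Finsupp.prod_congr fun j hj => ?_
    rw [if_neg (by rintro rfl; exact Finsupp.mem_support_iff.mp hj hu)]
  · rw [Finsupp.prod, Finset.prod_eq_zero (Finsupp.mem_support_iff.mpr hu) (by simp [hu]),
      mul_zero]

lemma coeff_evalX3Zero (f : MvPolynomial (Fin 3) ℂ) (ν : Fin 3 →₀ ℕ) :
    coeff ν (evalX3Zero f) = if ν 2 = 0 then coeff ν f else 0 := by
  induction f using MvPolynomial.induction_on' with
  | monomial u c =>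
    rw [evalX3Zero_monomial]
    by_cases hu : u = ν
    · subst hu
      split_ifs <;> simp
    · split_ifs <;> simp [coeff_monomial, hu]
  | add p q hp hq =>
    rw [map_add, coeff_add, hp, hq]
    split_ifs <;> simp

lemma isHomogeneous_evalX3Zero {p : MvPolynomial (Fin 3) ℂ} {n : ℕ} (hp : p.IsHomogeneous n) :
    (evalX3Zero p).IsHomogeneous n := by
  have h := hp.aeval (n := 1)
    (fun j : Fin 3 => if j = 2 then (0 : MvPolynomial (Fin 3) ℂ) else X j) fun j => by
      split_ifs
      exacts [isHomogeneous_zero _ _ _, isHomogeneous_X _ _]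
  rw [one_mul] at h
  exact h

/-- The degree `e` part of the image of `M` in `ℂ[x₁, x₂] = ℂ[x₁, x₂, x₃] / (x₃)`. -/
def hyperplaneSection (M : Ideal (MvPolynomial (Fin 3) ℂ)) (e : ℕ) :
    Submodule ℂ (MvPolynomial (Fin 3) ℂ) :=
  (gradedPiece M e).map evalX3Zero.toLinearMap

variable {M : Ideal (MvPolynomial (Fin 3) ℂ)}

instance (M : Ideal (MvPolynomial (Fin 3) ℂ)) (e : ℕ) :
    FiniteDimensional ℂ (hyperplaneSection M e) := by
  have : FiniteDimensional ℂ (homogeneousSubmodule (Fin 3) ℂ e) :=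
    Module.Finite.iff_fg.mpr (homogeneousSubmodule_fg _ _ e)
  refine Submodule.finiteDimensional_of_le (S₂ := homogeneousSubmodule (Fin 3) ℂ e) ?_
  rintro _ ⟨f, ⟨-, hf⟩, rfl⟩
  exact isHomogeneous_evalX3Zero hf

lemma exists_monomialMem_of_mem_hyperplaneSection {e : ℕ} {q : MvPolynomial (Fin 3) ℂ}
    (hq : q ∈ hyperplaneSection M e) (hq0 : q ≠ 0) :
    ∃ a β, a + β = e ∧ monomialMem (mono3 a β 0) (initialIdeal M) ∧
      coeff (mono3 a β 0) q ≠ 0 := by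
  obtain ⟨f, ⟨hfM, hfe⟩, rfl⟩ := hq
  simp only [AlgHom.toLinearMap_apply] at hq0 ⊢
  obtain ⟨μ, hμ⟩ := exists_isLeadMonOf (f := f) fun hf => hq0 (by simp [hf])
  obtain ⟨ξ, hξ⟩ := support_nonempty.mpr hq0
  rw [mem_support_iff, coeff_evalX3Zero] at hξ
  by_cases hξ2 : ξ 2 = 0
  swap
  · simp [hξ2] at hξ
  rw [if_pos hξ2] at hξ
  have hμ2 := (hμ.apply_two_eq_zero hfe (mem_support_iff.mpr hξ) hξ2).1
  have hμe := edeg_eq_of_mem_support hfe hμ.1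
  rw [edeg_fin3] at hμe
  have hμ' : mono3 (μ 0) (μ 1) 0 = μ := by rw [← hμ2, mono3_apply_self]
  refine ⟨μ 0, μ 1, by omega, ?_, ?_⟩ <;> rw [hμ']
  · exact monomialMem_initialIdeal_of_isLeadMonOf hfM hμ
  · rw [coeff_evalX3Zero, if_pos hμ2]
    exact mem_support_iff.mp hμ.1

lemma finrank_hyperplaneSection_le {e n : ℕ}
    (h : ∀ a β, a + β = e → monomialMem (mono3 a β 0) (initialIdeal M) → β < n) :
    Module.finrank ℂ (hyperplaneSection M e) ≤ n := by
  let Θ : hyperplaneSection M e →ₗ[ℂ] (Fin n → ℂ) :=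
    LinearMap.pi fun b => (lcoeff ℂ (mono3 (e - b) b 0)).comp (Submodule.subtype _)
  have hΘ : Function.Injective Θ := by
    rw [← LinearMap.ker_eq_bot, Submodule.eq_bot_iff]
    rintro ⟨q, hq⟩ hΘq
    by_contra hq0
    obtain ⟨a, β, rfl, hmem, hcoeff⟩ :=
      exists_monomialMem_of_mem_hyperplaneSection hq fun h => hq0 (by simp [h])
    have := congrFun hΘq ⟨β, h a β rfl hmem⟩
    simp [Θ] at this
    exact hcoeff this
  simpa using LinearMap.finrank_le_finrank_of_injective hΘ

lemma le_finrank_hyperplaneSection (hM : IsHomogIdeal M) (hB : IsBorelFixed (initialIdeal M))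
    {a β : ℕ} (h : monomialMem (mono3 a β 0) (initialIdeal M)) :
    β + 1 ≤ Module.finrank ℂ (hyperplaneSection M (a + β)) := by
  have hlead : ∀ γ : Fin (β + 1), ∃ f ∈ M, f.IsHomogeneous (a + β) ∧
      IsLeadMonOf (mono3 (a + β - γ) γ 0) f := by
    intro γ
    have hγ := hB.mono3_shift_10 (a := a) (b := γ) (j := β - γ)
      (by rwa [Nat.add_sub_cancel' (Nat.lt_succ_iff.mp γ.2)])
    rw [show a + (β - γ) = a + β - γ by omega] at hγ
    simpa [show a + β - γ + γ = a + β by omega] using exists_isHomogeneous_isLeadMonOf hM hγ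
  choose f hfM hfe hf using hlead
  let v : Fin (β + 1) → hyperplaneSection M (a + β) :=
    fun γ => ⟨evalX3Zero (f γ), f γ, ⟨hfM γ, hfe γ⟩, rfl⟩
  let φ : Fin (β + 1) → hyperplaneSection M (a + β) →ₗ[ℂ] ℂ :=
    fun γ => (lcoeff ℂ (mono3 (a + β - γ) γ 0)).comp (Submodule.subtype _)
  have hv : LinearIndependent ℂ v := by
    refine linearIndependent_of_triangular φ (fun γ => ?_) fun γ γ' hγγ' => ?_
    · simpa [φ, v, coeff_evalX3Zero] using mem_support_iff.mp (hf γ).1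
    · by_contra hne
      simp only [φ, v, LinearMap.comp_apply, Submodule.subtype_apply, lcoeff_apply,
        coeff_evalX3Zero, mono3_apply_two, if_true] at hne
      have := ((hf γ').apply_two_eq_zero (hfe γ') (mem_support_iff.mpr hne) (by simp)).2
      simp only [mono3_apply_one] at this
      exact absurd hγγ' (not_lt.mpr (Fin.le_def.mpr this))
  simpa using hv.fintype_card_le_finrank

lemma map_mulLeft_hyperplaneSection_le (e : ℕ) {j : Fin 3} (hj : j ≠ 2) :
    (hyperplaneSection M e).map (LinearMap.mulLeft ℂ (X j)) ≤ hyperplaneSection M (e + 1) := by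
  rintro _ ⟨_, ⟨f, ⟨hfM, hfe⟩, rfl⟩, rfl⟩
  refine ⟨X j * f, ⟨M.mul_mem_left _ hfM, ?_⟩, ?_⟩
  · simpa [add_comm] using (isHomogeneous_X ℂ j).mul hfe
  · simp [evalX3Zero_X, hj]

lemma hyperplaneSection_spanDegLE_succ_le (I : Ideal (MvPolynomial (Fin 3) ℂ)) {d e : ℕ}
    (hde : d ≤ e) :
    hyperplaneSection (spanDegLE I d) (e + 1) ≤
      (hyperplaneSection (spanDegLE I d) e).map (LinearMap.mulLeft ℂ (X 0)) ⊔
        (hyperplaneSection (spanDegLE I d) e).map (LinearMap.mulLeft ℂ (X 1)) := by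
  refine (Submodule.map_mono (gradedPiece_span_succ_le (T := {f | f ∈ I ∧ ∃ n ≤ d, _})
    fun t ⟨_, n, hn, ht⟩ => ⟨n, hn.trans hde, ht⟩)).trans ?_
  rw [homogeneousSubmodule_one_eq_span_X, ← Submodule.span_eq (gradedPiece _ e),
    Submodule.span_mul_span, Submodule.map_span, Submodule.span_le]
  rintro _ ⟨_, ⟨_, ⟨j, rfl⟩, p, hp, rfl⟩, rfl⟩
  fin_cases j
  · exact Submodule.mem_sup_left ⟨_, ⟨p, hp, rfl⟩, by simp [evalX3Zero_X]⟩
  · exact Submodule.mem_sup_right ⟨_, ⟨p, hp, rfl⟩, by simp [evalX3Zero_X]⟩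
  · simp [evalX3Zero_X]

lemma finrank_hyperplaneSection_spanDegLE_concave (I : Ideal (MvPolynomial (Fin 3) ℂ))
    {d e : ℕ} (hde : d ≤ e + 1) :
    Module.finrank ℂ (hyperplaneSection (spanDegLE I d) (e + 2)) +
        Module.finrank ℂ (hyperplaneSection (spanDegLE I d) e) ≤
      2 * Module.finrank ℂ (hyperplaneSection (spanDegLE I d) (e + 1)) :=
  finrank_add_finrank_le_of_le_sup_map (mul_right_injective₀ (X_ne_zero 0))
    (mul_right_injective₀ (X_ne_zero 1))
    (by rw [← LinearMap.mulLeft_mul, mul_comm, LinearMap.mulLeft_mul])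
    (hyperplaneSection_spanDegLE_succ_le I hde)
    (map_mulLeft_hyperplaneSection_le e (by decide))
    (map_mulLeft_hyperplaneSection_le e (by decide))

end HyperplaneSection

lemma finrank_hyperplaneSection_spanDegLE_le {I : Ideal (MvPolynomial (Fin 3) ℂ)}
    (hI : IsHomogIdeal I) {i n : ℕ} (hB : IsBorelFixed (initialIdeal (spanDegLE I (i + n + 2))))
    (hlow : ∀ μ, monomialMem μ (initialIdeal I) → edeg μ ≤ i + n + 2 → i + 1 ≤ μ 0)
    (hcorner : monomialMem (mono3 (i + 1) n 0) (initialIdeal I)) (k : ℕ) :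
    Module.finrank ℂ (hyperplaneSection (spanDegLE I (i + n + 2)) (i + n + 1 + k)) ≤
      n + 1 + k := by
  have hle : ∀ e ≤ i + n + 2,
      Module.finrank ℂ (hyperplaneSection (spanDegLE I (i + n + 2)) e) ≤ e - i :=
    fun e he => finrank_hyperplaneSection_le fun a β hab hmem => by
      have := hlow _ (initialIdeal_mono (spanDegLE_le I _) hmem) (by simp; omega)
      simp only [mono3_apply_zero] at this
      omega
  have hcornerM := monomialMem_initialIdeal_spanDegLE hI hcorner (d := i + n + 2) (by simp; omega)
  have h0 := le_finrank_hyperplaneSection (isHomogIdeal_spanDegLE I _) hB hcornerM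
  rw [show i + 1 + n = i + n + 1 by omega] at h0
  have hr : ∀ k, Module.finrank ℂ (hyperplaneSection (spanDegLE I (i + n + 2)) (i + n + 1 + k)) ≤
      Module.finrank ℂ (hyperplaneSection (spanDegLE I (i + n + 2)) (i + n + 1)) + k :=
    le_add_of_concave
      (fun k => finrank_hyperplaneSection_spanDegLE_concave I (e := i + n + 1 + k) (by omega))
      (by
        show Module.finrank ℂ (hyperplaneSection (spanDegLE I (i + n + 2)) (i + n + 2)) ≤
          Module.finrank ℂ (hyperplaneSection (spanDegLE I (i + n + 2)) (i + n + 1)) + 1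
        have := hle (i + n + 2) le_rfl
        omega)
  have := hr k
  have := hle (i + n + 1) (by omega)
  omega

theorem le_apply_zero_of_monomialMem_initialIdeal_spanDegLE {I : Ideal (MvPolynomial (Fin 3) ℂ)}
    (hI : IsHomogIdeal I) {i n : ℕ} (hB : IsBorelFixed (initialIdeal (spanDegLE I (i + n + 2))))
    (hlow : ∀ μ, monomialMem μ (initialIdeal I) → edeg μ ≤ i + n + 2 → i + 1 ≤ μ 0)
    (hcorner : monomialMem (mono3 (i + 1) n 0) (initialIdeal I)) {μ : Fin 3 →₀ ℕ}
    (hμ : monomialMem μ (initialIdeal (spanDegLE I (i + n + 2)))) : i + 1 ≤ μ 0 := by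
  by_contra! hμ0
  have hx := hB.mono3_shift_21 (by rwa [mono3_apply_self])
  have hdeg : i + n + 1 ≤ μ 0 + (μ 1 + μ 2) := by
    by_contra! hdeg
    have := hlow _ (initialIdeal_mono (spanDegLE_le I _) hx) (by simp; omega)
    simp only [mono3_apply_zero] at this
    omega
  obtain ⟨k, hk⟩ := Nat.exists_eq_add_of_le hdeg
  have hlo := le_finrank_hyperplaneSection (isHomogIdeal_spanDegLE I _) hB hx
  rw [hk] at hlo
  have := finrank_hyperplaneSection_spanDegLE_le hI hB hlow hcorner k
  omega

theorem split_nonconnected_ideal_general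
    (J G : Ideal (MvPolynomial (Fin 3) ℂ)) (hhom : IsHomogIdeal J)
    (hG : IsGinOf J G)
    (hx2 : ∃ b : ℕ, monomialMem (Finsupp.single 1 b) G)
    (s : ℕ) (hs : s = sInf {a : ℕ | monomialMem (Finsupp.single 0 a) G})
    (ν : ℕ → ℕ)
    (hν : ∀ a, ν a = sInf {b : ℕ | monomialMem (Finsupp.single 0 a + Finsupp.single 1 b) G})
    (i : ℕ) (hi : i + 1 < s) (hgap : ν (i + 1) + 2 < ν i)
    (K : Ideal (MvPolynomial (Fin 3) ℂ))
    (hK : K = Ideal.span {f | f ∈ J ∧ f.totalDegree ≤ i + ν (i + 1) + 2})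
    (GK : Ideal (MvPolynomial (Fin 3) ℂ)) (hGK : IsGinOf K GK) :
    ∀ μ : Fin 3 →₀ ℕ, monomialMem μ GK → i + 1 ≤ μ 0 := by
  obtain ⟨g, hg, hgJ, hgK⟩ := exists_isUnit_det_initialIdeal_matAct_eq hG hGK
  have hνG : ∀ a, IsLeast {b | monomialMem (mono3 a b 0) G} (ν a) :=
    fun a => by rw [hν a]; exact isLeast_sInf_monomialMem hx2 a
  have hsG : ∀ a < s, ¬ monomialMem (mono3 a 0 0) G :=
    fun a ha h => Nat.notMem_of_lt_sInf (by rwa [hs] at ha) (by simpa [mono3] using h)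
  have hKg : matAct g K = spanDegLE (matAct g J) (i + ν (i + 1) + 2) := by
    rw [hK, span_totalDegree_le_eq_spanDegLE hhom, matAct_spanDegLE hg]
  rw [← hgK, hKg]
  refine fun μ => le_apply_zero_of_monomialMem_initialIdeal_spanDegLE (hhom.matAct hg) ?_ ?_ ?_
  · rw [← hKg, hgK]
    exact hGK.1
  · rw [hgJ]
    exact fun μ hμ hdeg => hG.1.le_apply_zero_of_edeg_le hsG hνG hi hgap hμ hdeg
  · rw [hgJ]
    exact (hνG (i + 1)).1

/-- Let `J ⊆ ℂ[x₁,x₂,x₃]` be a homogeneous ideal whose generic initial ideal `G` contains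
a power of `x₁` and a power of `x₂`.  Set `s = min{a : x₁^a ∈ G}` and
`ν_a = min{b : x₁^a x₂^b ∈ G}`.  If `0 ≤ i < s − 1` and `ν_{i+1} + 2 < ν_i`, and `K ⊆ J`
is the ideal generated by all elements of `J` of degree `≤ i + ν_{i+1} + 2`, then every
monomial in the generic initial ideal of `K` is divisible by `x₁^{i+1}`. -/
theorem split_nonconnected_ideal
    (J G : Ideal (MvPolynomial (Fin 3) ℂ)) (hhom : IsHomogIdeal J)
    (hG : IsGinOf J G)
    (hx1 : ∃ a : ℕ, monomialMem (Finsupp.single 0 a) G)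
    (hx2 : ∃ b : ℕ, monomialMem (Finsupp.single 1 b) G)
    (s : ℕ) (hs : s = sInf {a : ℕ | monomialMem (Finsupp.single 0 a) G})
    (ν : ℕ → ℕ)
    (hν : ∀ a, ν a = sInf {b : ℕ | monomialMem (Finsupp.single 0 a + Finsupp.single 1 b) G})
    (i : ℕ) (hi : i + 1 < s) (hgap : ν (i + 1) + 2 < ν i)
    (K : Ideal (MvPolynomial (Fin 3) ℂ))
    (hK : K = Ideal.span {f | f ∈ J ∧ f.totalDegree ≤ i + ν (i + 1) + 2})
    (GK : Ideal (MvPolynomial (Fin 3) ℂ)) (hGK : IsGinOf K GK) :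
    ∀ μ : Fin 3 →₀ ℕ, monomialMem μ GK → i + 1 ≤ μ 0 :=
  split_nonconnected_ideal_general J G hhom hG hx2 s hs ν hν i hi hgap K hK GK hGK

end
end

section
/- (Syzygy configuration) Let I ⊆ S = ℂ[x₁,…,x_{n+1}] be a Borel-fixed monomial ideal with minimal generators x^{J₁},…,x^{J_N}, and let φ : S^N → S be the S-linear map sending the j-th standard basis vector e_j to x^{J_j}. Then: (a) for each j and each 1 ≤ i < max(J_j) there exist an index l and a monomial x^L with x_i·x^{J_j} = x^L·x^{J_l} and min(L) ≥ max(J_l); and (b) the module of first syzygies ker φ is generated by the elements x_i·e_j − x^L·e_l, ranging over all data (i, j, l, L) with 1 ≤ j ≤ N, 1 ≤ i < max(J_j), x_i·x^{J_j} = x^L·x^{J_l}, and min(L) ≥ max(J_l). -/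
open MvPolynomial

noncomputable section

/-- `x^μ` is a minimal generator of the monomial ideal `J`: it lies in `J` and is not a
proper multiple of another monomial of `J`. -/
def IsMinGenOf {m : ℕ} (μ : Fin m →₀ ℕ) (J : Ideal (MvPolynomial (Fin m) ℂ)) : Prop :=
  monomialMem μ J ∧ ∀ ν : Fin m →₀ ℕ, monomialMem ν J → ν ≤ μ → ν = μ
/-- The `S`-linear map `φ : S^N → S` sending the `j`-th standard basis vector to `g j`. -/
def combMap {m N : ℕ} (g : Fin N → MvPolynomial (Fin m) ℂ) :
    (Fin N → MvPolynomial (Fin m) ℂ) →ₗ[MvPolynomial (Fin m) ℂ] MvPolynomial (Fin m) ℂ where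
  toFun v := ∑ l, v l * g l
  map_add' u v := by simp [add_mul, Finset.sum_add_distrib]
  map_smul' c v := by simp [Finset.mul_sum, mul_assoc, smul_eq_mul]

/-!
Every monomial `x^μ ∈ I` factors uniquely as `x^μ = x^L · x^{J l}` with `max(J l) ≤ min(L)`
(Eliahou–Kervaire). A factorisation maximising the weight `Σ_p p · L_p` has this shape, since
otherwise a Borel move of `x^{J l}` would shift exponent of the cofactor to a larger index;
uniqueness comes from the minimality of the generators. Part (a) is this factorisation of
`x_i · x^{J j}`.

For (b), the kernel of a monomial map is spanned by the binomial syzygies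
`x^A e_j - x^{A'} e_{j'}` with `A + J j = A' + J j'`, by cancelling one term at a time. If
`x^A · x^{J j}` is not the canonical factorisation, some `i ∈ supp A` is smaller than
`max(J j)`, and `x^A / x_i` times the syzygy of (b) attached to `x_i e_j` replaces `(j, A)` by a
pair whose cofactor has larger weight; after finitely many steps the canonical factorisation
is reached.
-/

open Finsupp (single weight weight_single le_weight_of_ne_zero')

lemma weight_le_weight_of_le {σ : Type*} (w : σ → ℕ) {A B : σ →₀ ℕ} (h : A ≤ B) :
    weight w A ≤ weight w B := by
  obtain ⟨C, rfl⟩ := le_iff_exists_add.1 h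
  simp

lemma exists_eq_add_single_one_of_mem_support {ι : Type*} {A : ι →₀ ℕ} {i : ι}
    (hi : i ∈ A.support) : ∃ B, A = B + single i 1 :=
  ⟨A - single i 1,
    (Finsupp.sub_add_single_one_cancel (Finsupp.mem_support_iff.1 hi)).symm⟩

section TermCount

variable {ι σ R : Type*}

def termCount [Fintype ι] [CommSemiring R] (v : ι → MvPolynomial σ R) : ℕ :=
  ∑ r, (v r).support.card

lemma card_support_add_monomial_le [CommSemiring R] {p : MvPolynomial σ R} {L : σ →₀ ℕ}
    (hL : L ∈ p.support) (c : R) : (p + monomial L c).support.card ≤ p.support.card := by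
  classical
  refine Finset.card_le_card (support_add.trans (Finset.union_subset le_rfl ?_))
  exact support_monomial_subset.trans (Finset.singleton_subset_iff.2 hL)

variable [CommRing R]

lemma card_support_sub_monomial_coeff_lt {p : MvPolynomial σ R} {A : σ →₀ ℕ}
    (hA : A ∈ p.support) : (p - monomial A (coeff A p)).support.card < p.support.card := by
  classical
  refine (Finset.card_le_card fun B hB => ?_).trans_lt (Finset.card_erase_lt_of_mem hA)
  rw [mem_support_iff, coeff_sub, coeff_monomial] at hB
  split_ifs at hB with hAB
  · exact absurd (hAB ▸ sub_self _) hB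
  · exact Finset.mem_erase.2 ⟨Ne.symm hAB, mem_support_iff.2 (by simpa using hB)⟩

lemma termCount_sub_single_add_single_lt [Fintype ι] [DecidableEq ι]
    {v : ι → MvPolynomial σ R} {j l : ι} (hlj : l ≠ j) {A L : σ →₀ ℕ}
    (hA : A ∈ (v j).support) (hL : L ∈ (v l).support) :
    termCount (v - Pi.single j (monomial A (coeff A (v j)))
      + Pi.single l (monomial L (coeff A (v j)))) < termCount v := by
  refine Finset.sum_lt_sum (fun r _ => ?_) ⟨j, Finset.mem_univ j, ?_⟩
  · rcases eq_or_ne r j with rfl | hrj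
    · simpa [hlj.symm] using (card_support_sub_monomial_coeff_lt hA).le
    rcases eq_or_ne r l with rfl | hrl
    · simpa [hrj] using card_support_add_monomial_le hL _
    · simp [hrj, hrl]
  · simpa [hlj.symm] using card_support_sub_monomial_coeff_lt hA

end TermCount

section MonomialIdeal

variable {m : ℕ} {I : Ideal (MvPolynomial (Fin m) ℂ)}

lemma monomialMem_of_le {A B : Fin m →₀ ℕ} (hA : monomialMem A I) (h : A ≤ B) :
    monomialMem B I := by
  obtain ⟨C, rfl⟩ := le_iff_exists_add.1 h
  rw [monomialMem, ← mul_one (1 : ℂ), ← monomial_mul]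
  exact I.mul_mem_right _ hA

lemma exists_isMinGenOf_le {μ : Fin m →₀ ℕ} (h : monomialMem μ I) :
    ∃ ν, IsMinGenOf ν I ∧ ν ≤ μ := by
  obtain ⟨ν, ⟨hν, hνμ⟩, hmin⟩ :=
    wellFounded_lt.has_min {ν | monomialMem ν I ∧ ν ≤ μ} ⟨μ, h, le_rfl⟩
  refine ⟨ν, ⟨hν, fun ρ hρ hρν => ?_⟩, hνμ⟩
  by_contra hne
  exact hmin ρ ⟨hρ, hρν.trans hνμ⟩ (lt_of_le_of_ne hρν hne)

lemma monomialMem_iff_exists_le {N : ℕ} {J : Fin N → (Fin m →₀ ℕ)}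
    (hJmin : ∀ l, IsMinGenOf (J l) I) (hJall : ∀ μ, IsMinGenOf μ I → ∃ l, J l = μ)
    {μ : Fin m →₀ ℕ} : monomialMem μ I ↔ ∃ l, J l ≤ μ := by
  refine ⟨fun h => ?_, fun ⟨l, hl⟩ => monomialMem_of_le (hJmin l).1 hl⟩
  obtain ⟨ν, hν, hνμ⟩ := exists_isMinGenOf_le h
  obtain ⟨l, rfl⟩ := hJall ν hν
  exact ⟨l, hνμ⟩

lemma IsBorelFixed.monomialMem_add_single_of_le (hB : IsBorelFixed I) {B : Fin m →₀ ℕ}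
    {i q : Fin m} (hiq : i ≤ q) (h : monomialMem (B + single q 1) I) :
    monomialMem (B + single i 1) I := by
  obtain ⟨d, hd⟩ : ∃ d, (q : ℕ) = i + d := ⟨q - i, by omega⟩
  induction d generalizing q with
  | zero => rwa [show i = q from Fin.ext (by omega)]
  | succ d ih =>
    obtain ⟨k, hk⟩ : ∃ k : Fin m, (k : ℕ) = i + d := ⟨⟨i + d, by omega⟩, rfl⟩
    refine ih (q := k) (Fin.le_def.2 (by omega)) ?_ hk
    have := hB.2 _ h k q (by omega) (by simp)
    rwa [add_right_comm, add_tsub_cancel_right] at this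

end MonomialIdeal

section CanonicalDecomposition

variable {m N : ℕ}

/-- `max(A) ≤ min(B)` in the paper's notation; it holds trivially when `A = 0` or `B = 0`. -/
def SupportLE (A B : Fin m →₀ ℕ) : Prop := ∀ q ∈ B.support, ∀ p ∈ A.support, p ≤ q

/-- The Eliahou–Kervaire decomposition `x^μ = x^{J l} · x^L` with `max(J l) ≤ min(L)`. -/
def IsCanonicalDecomp (J : Fin N → (Fin m →₀ ℕ)) (μ : Fin m →₀ ℕ) (l : Fin N)
    (L : Fin m →₀ ℕ) : Prop :=
  μ = L + J l ∧ SupportLE (J l) L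

lemma SupportLE.le_or_le_of_add_eq {A B LA LB : Fin m →₀ ℕ} (hA : SupportLE A LA)
    (hB : SupportLE B LB) (h : LA + A = LB + B) : A ≤ B ∨ B ≤ A := by
  rw [or_iff_not_imp_left, Finsupp.le_def, not_forall]
  rintro ⟨p, hp⟩ r
  by_contra hr
  have hpt : ∀ s, LA s + A s = LB s + B s := fun s => by simpa using congrArg (· s) h
  have h1 := hpt p
  have h2 := hpt r
  have hpr : p ≤ r :=
    hA r (Finsupp.mem_support_iff.2 (by omega)) p (Finsupp.mem_support_iff.2 (by omega))
  have hrp : r ≤ p :=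
    hB p (Finsupp.mem_support_iff.2 (by omega)) r (Finsupp.mem_support_iff.2 (by omega))
  rw [le_antisymm hpr hrp] at hp
  omega

variable {I : Ideal (MvPolynomial (Fin m) ℂ)} {J : Fin N → (Fin m →₀ ℕ)}

lemma IsCanonicalDecomp.unique (hJinj : Function.Injective J)
    (hJmin : ∀ l, IsMinGenOf (J l) I) {μ L L' : Fin m →₀ ℕ} {l l' : Fin N}
    (h : IsCanonicalDecomp J μ l L) (h' : IsCanonicalDecomp J μ l' L') :
    l = l' ∧ L = L' := by
  have hJ : J l = J l' := by
    rcases h.2.le_or_le_of_add_eq h'.2 (h.1.symm.trans h'.1) with hle | hle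
    · exact (hJmin l').2 _ (hJmin l).1 hle
    · exact ((hJmin l).2 _ (hJmin l').1 hle).symm
  obtain rfl := hJinj hJ
  exact ⟨rfl, add_right_cancel (h.1.symm.trans h'.1)⟩

lemma IsCanonicalDecomp.exists_lt_mem_support (hJmin : ∀ l, IsMinGenOf (J l) I)
    {i q : Fin m} {j l : Fin N} {L : Fin m →₀ ℕ}
    (h : IsCanonicalDecomp J (single i 1 + J j) l L) (hq : q ∈ (J j).support)
    (hiq : i < q) : ∃ r ∈ L.support, i < r := by
  by_contra! hle
  rcases eq_or_ne L 0 with rfl | hL0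
  · have hJ : J j = J l :=
      (hJmin l).2 _ (hJmin j).1 (by rw [← zero_add (J l), ← h.1]; exact le_add_self)
    simpa [hJ] using h.1
  obtain ⟨r, hr⟩ := Finsupp.support_nonempty_iff.2 hL0
  have hpos : 0 < L q + J l q := by
    have := congrArg (· q) h.1
    simp only [Finsupp.add_apply] at this
    have := Nat.pos_of_ne_zero (Finsupp.mem_support_iff.1 hq)
    omega
  rcases Nat.eq_zero_or_pos (L q) with hLq | hLq
  · have hqr := h.2 r hr q (Finsupp.mem_support_iff.2 (by omega))
    exact (hqr.trans (hle r hr)).not_gt hiq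
  · exact (hle q (Finsupp.mem_support_iff.2 hLq.ne')).not_gt hiq

lemma exists_isCanonicalDecomp (hB : IsBorelFixed I) (hJmin : ∀ l, IsMinGenOf (J l) I)
    (hJall : ∀ μ, IsMinGenOf μ I → ∃ l, J l = μ) {μ : Fin m →₀ ℕ}
    (h : monomialMem μ I) : ∃ l L, IsCanonicalDecomp J μ l L := by
  classical
  have hmem (ν : Fin m →₀ ℕ) : monomialMem ν I ↔ ∃ l, J l ≤ ν :=
    monomialMem_iff_exists_le hJmin hJall
  obtain ⟨l, hl, hmax⟩ := (Finset.univ.filter (J · ≤ μ)).exists_max_image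
    (fun l => weight Fin.val (μ - J l)) (by
      obtain ⟨l, hl⟩ := (hmem μ).1 h
      exact ⟨l, by simpa using hl⟩)
  simp only [Finset.mem_filter, Finset.mem_univ, true_and] at hl hmax
  refine ⟨l, μ - J l, (tsub_add_cancel_of_le hl).symm, fun p hp q hq => ?_⟩
  by_contra! hpq
  obtain ⟨B, hJl⟩ := exists_eq_add_single_one_of_mem_support hq
  obtain ⟨L, hL⟩ := exists_eq_add_single_one_of_mem_support hp
  have hμ : μ = (L + single q 1) + (B + single p 1) := by
    rw [← tsub_add_cancel_of_le hl, hL, hJl]; abel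
  obtain ⟨l', hl'⟩ :=
    (hmem _).1 (hB.monomialMem_add_single_of_le hpq.le (hJl ▸ (hJmin l).1))
  have hlt : weight Fin.val (μ - J l) < weight Fin.val (μ - J l') := by
    calc weight Fin.val (μ - J l) < weight Fin.val (L + single q 1) := by
          simpa [hL, weight_single] using hpq
      _ = weight Fin.val (μ - (B + single p 1)) := by
        rw [hμ, add_tsub_cancel_right]
      _ ≤ weight Fin.val (μ - J l') :=
        weight_le_weight_of_le _ (tsub_le_tsub_left hl' μ)
  exact (hmax l' (hl'.trans (hμ ▸ le_add_self))).not_gt hlt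

end CanonicalDecomposition

section Syzygies

variable {m N : ℕ}

local notation "S" => MvPolynomial (Fin m) ℂ

def binomialSyzygies (J : Fin N → (Fin m →₀ ℕ)) : Set (Fin N → S) :=
  {w | ∃ (j l : Fin N) (A L : Fin m →₀ ℕ), A + J j = L + J l ∧
    w = Pi.single j (monomial A (1 : ℂ)) - Pi.single l (monomial L (1 : ℂ))}

/-- The Eliahou–Kervaire syzygies `x_i e_j - x^L e_l` of part (b). -/
def ekSyzygies (J : Fin N → (Fin m →₀ ℕ)) : Set (Fin N → S) :=
  {w | ∃ (i : Fin m) (j l : Fin N) (L : Fin m →₀ ℕ), (∃ p ∈ (J j).support, i < p) ∧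
    single i 1 + J j = L + J l ∧ SupportLE (J l) L ∧
    w = Pi.single j (X i) - Pi.single l (monomial L (1 : ℂ))}

lemma combMap_single (g : Fin N → S) (j : Fin N) (a : S) :
    combMap g (Pi.single j a) = a * g j := by
  simp [combMap, Pi.single_apply]

lemma coeff_combMap_monomial (J : Fin N → (Fin m →₀ ℕ)) (v : Fin N → S)
    (μ : Fin m →₀ ℕ) :
    coeff μ (combMap (fun l => monomial (J l) (1 : ℂ)) v) =
      ∑ l, if J l ≤ μ then coeff (μ - J l) (v l) else 0 := by
  simp [combMap, coeff_sum, coeff_mul_monomial']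

lemma binomialSyzygies_subset_ker (J : Fin N → (Fin m →₀ ℕ)) :
    binomialSyzygies J ⊆ LinearMap.ker (combMap fun l => monomial (J l) (1 : ℂ)) := by
  rintro _ ⟨j, l, A, L, h, rfl⟩
  simp [combMap_single, monomial_mul, h]

lemma ekSyzygies_subset_binomialSyzygies (J : Fin N → (Fin m →₀ ℕ)) :
    ekSyzygies J ⊆ binomialSyzygies J := by
  rintro _ ⟨i, j, l, L, -, h, -, rfl⟩
  exact ⟨j, l, _, L, h, rfl⟩

lemma exists_ne_mem_support_of_mem_ker {J : Fin N → (Fin m →₀ ℕ)} {v : Fin N → S}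
    (hv : v ∈ LinearMap.ker (combMap fun l => monomial (J l) (1 : ℂ))) {j : Fin N}
    {A : Fin m →₀ ℕ} (hA : A ∈ (v j).support) :
    ∃ l ≠ j, ∃ L ∈ (v l).support, L + J l = A + J j := by
  have hsum := coeff_combMap_monomial J v (A + J j)
  rw [LinearMap.mem_ker.1 hv, coeff_zero] at hsum
  by_contra! hnone
  rw [Finset.sum_eq_single_of_mem j (Finset.mem_univ j) fun l _ hlj => ?_] at hsum
  · rw [if_pos le_add_self, add_tsub_cancel_right] at hsum
    exact mem_support_iff.1 hA hsum.symm
  split_ifs with hle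
  · by_contra hne
    exact hnone l hlj _ (mem_support_iff.2 hne) (tsub_add_cancel_of_le hle)
  · rfl

lemma ker_combMap_le_span_binomialSyzygies (J : Fin N → (Fin m →₀ ℕ)) :
    LinearMap.ker (combMap fun l => monomial (J l) (1 : ℂ)) ≤
      Submodule.span S (binomialSyzygies J) := by
  intro v hv
  induction hk : termCount v using Nat.strong_induction_on generalizing v with
  | _ k ih =>
  by_cases hv0 : v = 0
  · exact hv0 ▸ Submodule.zero_mem _
  obtain ⟨j, hj⟩ := Function.ne_iff.1 hv0
  obtain ⟨A, hA⟩ := support_nonempty.2 hj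
  obtain ⟨l, hlj, L, hL, hLA⟩ := exists_ne_mem_support_of_mem_ker hv hA
  set c := coeff A (v j)
  set w : Fin N → S := (C c : S) •
    (Pi.single j (monomial A (1 : ℂ)) - Pi.single l (monomial L (1 : ℂ)) : Fin N → S)
  have hw : w ∈ Submodule.span S (binomialSyzygies J) :=
    Submodule.smul_mem _ _ (Submodule.subset_span ⟨j, l, A, L, hLA.symm, rfl⟩)
  have hvw : v - w = v - Pi.single j (monomial A c) + Pi.single l (monomial L c) := by
    simp only [w, smul_sub, ← Pi.single_smul, smul_eq_mul, C_mul_monomial, mul_one]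
    abel
  have hlt : termCount (v - w) < k :=
    hk ▸ hvw ▸ termCount_sub_single_add_single_lt hlj hA hL
  have hker : v - w ∈ LinearMap.ker (combMap fun l => monomial (J l) (1 : ℂ)) :=
    Submodule.sub_mem _ hv (Submodule.span_le.2 (binomialSyzygies_subset_ker J) hw)
  have hrest := ih _ hlt hker rfl
  simpa using Submodule.add_mem _ hrest hw

variable {I : Ideal (MvPolynomial (Fin m) ℂ)} {J : Fin N → (Fin m →₀ ℕ)}

lemma exists_weight_lt_single_sub_single_mem_span (hB : IsBorelFixed I)
    (hJmin : ∀ l, IsMinGenOf (J l) I) (hJall : ∀ μ, IsMinGenOf μ I → ∃ l, J l = μ)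
    {j : Fin N} {A μ : Fin m →₀ ℕ} (hA : A + J j = μ) (hnot : ¬ SupportLE (J j) A) :
    ∃ l A', A' + J l = μ ∧ weight Fin.val A < weight Fin.val A' ∧
      (Pi.single j (monomial A (1 : ℂ)) - Pi.single l (monomial A' (1 : ℂ)) : Fin N → S) ∈
        Submodule.span S (ekSyzygies J) := by
  simp only [SupportLE, not_forall, exists_prop, not_le] at hnot
  obtain ⟨i, hi, q, hq, hiq⟩ := hnot
  obtain ⟨A, rfl⟩ := exists_eq_add_single_one_of_mem_support hi
  obtain ⟨l, L, hdec⟩ := exists_isCanonicalDecomp hB hJmin hJall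
    (monomialMem_of_le (hJmin j).1 (le_add_self : J j ≤ single i 1 + J j))
  obtain ⟨r, hr, hir⟩ := hdec.exists_lt_mem_support hJmin hq hiq
  have hsyz :
      (Pi.single j (X i) - Pi.single l (monomial L (1 : ℂ)) : Fin N → S) ∈ ekSyzygies J :=
    ⟨i, j, l, L, ⟨q, hq, hiq⟩, hdec.1, hdec.2, rfl⟩
  refine ⟨l, A + L, ?_, ?_, ?_⟩
  · rw [← hA, add_assoc, ← hdec.1, add_assoc]
  · have := le_weight_of_ne_zero' Fin.val (Finsupp.mem_support_iff.1 hr)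
    simp only [map_add, weight_single, one_smul]
    omega
  · convert Submodule.smul_mem _ (monomial A (1 : ℂ)) (Submodule.subset_span hsyz) using 1
    simp [smul_sub, ← Pi.single_smul, X, monomial_mul]

lemma single_sub_single_mem_span_ekSyzygies (hB : IsBorelFixed I)
    (hJinj : Function.Injective J) (hJmin : ∀ l, IsMinGenOf (J l) I)
    (hJall : ∀ μ, IsMinGenOf μ I → ∃ l, J l = μ)
    {μ Ac : Fin m →₀ ℕ} {c : Fin N} (hc : IsCanonicalDecomp J μ c Ac) {j : Fin N}
    {A : Fin m →₀ ℕ} (hA : A + J j = μ) :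
    (Pi.single j (monomial A (1 : ℂ)) - Pi.single c (monomial Ac (1 : ℂ)) : Fin N → S) ∈
      Submodule.span S (ekSyzygies J) := by
  induction hk : weight Fin.val μ - weight Fin.val A
    using Nat.strong_induction_on generalizing j A with
  | _ k ih =>
  by_cases hcan : SupportLE (J j) A
  · obtain ⟨rfl, rfl⟩ := IsCanonicalDecomp.unique hJinj hJmin ⟨hA.symm, hcan⟩ hc
    simp
  obtain ⟨l, A', hA', hlt, hmem⟩ :=
    exists_weight_lt_single_sub_single_mem_span hB hJmin hJall hA hcan
  have hle : weight Fin.val A' ≤ weight Fin.val μ :=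
    hA' ▸ weight_le_weight_of_le _ le_self_add
  have := ih _ (by omega) hA' rfl
  simpa using Submodule.add_mem _ hmem this

lemma binomialSyzygies_subset_span_ekSyzygies (hB : IsBorelFixed I)
    (hJinj : Function.Injective J) (hJmin : ∀ l, IsMinGenOf (J l) I)
    (hJall : ∀ μ, IsMinGenOf μ I → ∃ l, J l = μ) :
    binomialSyzygies J ⊆ Submodule.span S (ekSyzygies J) := by
  rintro _ ⟨j, l, A, L, h, rfl⟩
  obtain ⟨c, Ac, hc⟩ := exists_isCanonicalDecomp hB hJmin hJall
    (monomialMem_of_le (hJmin j).1 (le_add_self : J j ≤ A + J j))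
  have hj := single_sub_single_mem_span_ekSyzygies hB hJinj hJmin hJall hc rfl
  have hl := single_sub_single_mem_span_ekSyzygies hB hJinj hJmin hJall hc h.symm
  simpa using Submodule.sub_mem _ hj hl

end Syzygies

/-- **Syzygy configuration.**  Let `I` be a Borel-fixed monomial ideal with minimal
generators `x^{J 1}, …, x^{J N}` and let `φ : S^N → S` send `e_j ↦ x^{J j}`.  Then
(a) for each `j` and each `i < max(J j)` there are `l` and `x^L` with
`x_i · x^{J j} = x^L · x^{J l}` and `min(L) ≥ max(J l)`; and
(b) the module of first syzygies `ker φ` is generated by the corresponding elements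
`x_i • e_j − x^L • e_l`. -/
theorem syzygy_configuration
    (n N : ℕ) (I : Ideal (MvPolynomial (Fin (n + 1)) ℂ)) (hB : IsBorelFixed I)
    (J : Fin N → (Fin (n + 1) →₀ ℕ)) (hJinj : Function.Injective J)
    (hJmin : ∀ l, IsMinGenOf (J l) I) (hJall : ∀ μ, IsMinGenOf μ I → ∃ l, J l = μ) :
    (∀ (j : Fin N) (i : Fin (n + 1)), (∃ p ∈ (J j).support, i < p) →
      ∃ (l : Fin N) (L : Fin (n + 1) →₀ ℕ),
        Finsupp.single i 1 + J j = L + J l ∧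
          ∀ p ∈ L.support, ∀ q ∈ (J l).support, q ≤ p) ∧
    LinearMap.ker (combMap fun l => monomial (J l) (1 : ℂ)) =
      Submodule.span (MvPolynomial (Fin (n + 1)) ℂ)
        {w : Fin N → MvPolynomial (Fin (n + 1)) ℂ |
          ∃ (i : Fin (n + 1)) (j l : Fin N) (L : Fin (n + 1) →₀ ℕ),
            (∃ p ∈ (J j).support, i < p) ∧
            Finsupp.single i 1 + J j = L + J l ∧
            (∀ p ∈ L.support, ∀ q ∈ (J l).support, q ≤ p) ∧
            w = Pi.single j (X i) - Pi.single l (monomial L (1 : ℂ))} := by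
  refine ⟨fun j i _ => ?_, le_antisymm ?_ ?_⟩
  · exact exists_isCanonicalDecomp hB hJmin hJall (monomialMem_of_le (hJmin j).1 le_add_self)
  · exact (ker_combMap_le_span_binomialSyzygies J).trans
      (Submodule.span_le.2 (binomialSyzygies_subset_span_ekSyzygies hB hJinj hJmin hJall))
  · exact Submodule.span_le.2
      ((ekSyzygies_subset_binomialSyzygies J).trans (binomialSyzygies_subset_ker J))

end
end

section
/- Let I ⊆ S = ℂ[x₁,…,x_{n+1}] be a Borel-fixed monomial ideal and let x^A and x^B be minimal generators of I with |A| > |B|. If x^M·x^A = x^N·x^B for some monomials x^M and x^N, then there exists an index i < max(A) such that x_i divides x^M. -/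
open MvPolynomial

noncomputable section

lemma edeg_eq_sum {m : ℕ} (A : Fin m →₀ ℕ) : edeg A = ∑ i, A i := by
  classical
  rw [edeg, Finsupp.sum_fintype]
  intro _; rfl

lemma addsub_apply {m : ℕ} (C : Fin m →₀ ℕ) (a b i : Fin m) :
    (C + Finsupp.single a 1 - Finsupp.single b 1 : Fin m →₀ ℕ) i
      = C i + (if a = i then 1 else 0) - (if b = i then 1 else 0) := by
  simp [Finsupp.tsub_apply, Finsupp.add_apply, Finsupp.single_apply]

lemma borel_move {m : ℕ} {I : Ideal (MvPolynomial (Fin m) ℂ)} (hB : IsBorelFixed I) :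
    ∀ d : ℕ, ∀ C : Fin m →₀ ℕ, ∀ k l : Fin m, (k : ℕ) + d = (l : ℕ) → 0 < d → 0 < C l →
      monomialMem C I → monomialMem (C + Finsupp.single k 1 - Finsupp.single l 1) I := by
  intro d
  induction d with
  | zero => intro C k l _ hd; omega
  | succ d ih =>
    intro C k l hkl _ hCl hC
    rcases Nat.eq_zero_or_pos d with rfl | hdpos
    · exact hB.2 C hC k l (by omega) hCl
    · have hk1 : (k : ℕ) + 1 < m := by
        have := l.isLt; omega
      set k' : Fin m := ⟨(k : ℕ) + 1, hk1⟩ with hk'def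
      have hkk' : k ≠ k' := by
        intro h; have : (k : ℕ) = (k' : ℕ) := congrArg Fin.val h
        simp [hk'def] at this
      have hk'l : k' ≠ l := by
        intro h; have : (k' : ℕ) = (l : ℕ) := congrArg Fin.val h
        simp [hk'def] at this; omega
      have hkl' : k ≠ l := by
        intro h; have : (k : ℕ) = (l : ℕ) := congrArg Fin.val h; omega
      have h1 := ih C k' l (by simp [hk'def]; omega) hdpos hCl hC
      have hval : 0 < (C + Finsupp.single k' 1 - Finsupp.single l 1 : Fin m →₀ ℕ) k' := by
        rw [addsub_apply]
        simp [Ne.symm hk'l]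
      have h2 := hB.2 _ h1 k k' (by simp [hk'def]) hval
      have heq2 : (C + Finsupp.single k' 1 - Finsupp.single l 1)
            + Finsupp.single k 1 - Finsupp.single k' 1
          = C + Finsupp.single k 1 - Finsupp.single l 1 := by
        ext i
        simp only [addsub_apply]
        by_cases h1 : k = i
        · subst h1
          rw [if_pos rfl, if_neg (fun h => hkk' h.symm), if_neg (fun h => hkl' h.symm)]
          omega
        · by_cases h2 : k' = i
          · subst h2
            rw [if_neg h1, if_pos rfl, if_neg (fun h => hk'l h.symm)]
            omega
          · by_cases h3 : l = i
            · subst h3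
              rw [if_neg h1, if_neg h2, if_pos rfl]
              omega
            · rw [if_neg h1, if_neg h2, if_neg h3]
              omega
      rwa [heq2] at h2

lemma key_lemma {m : ℕ} {I : Ideal (MvPolynomial (Fin m) ℂ)} (hB : IsBorelFixed I)
    {A : Fin m →₀ ℕ} (hA : IsMinGenOf A I) :
    ∀ E : ℕ, ∀ C : Fin m →₀ ℕ, (∑ i, (C i - A i)) = E → monomialMem C I →
      edeg C < edeg A → (∀ i, A i < C i → ∀ j ∈ A.support, j ≤ i) → False := by
  intro E
  induction E using Nat.strong_induction_on with
  | _ E ih =>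
    intro C hE hC hdeg hinv
    rcases Nat.eq_zero_or_pos E with rfl | hEpos
    · have hle : C ≤ A := by
        rw [Finsupp.le_def]
        intro i
        have h0 : C i - A i = 0 := by
          rcases Finset.sum_eq_zero_iff.mp hE i (Finset.mem_univ i) with h
          exact h
        omega
      have := hA.2 C hC hle
      rw [this] at hdeg; exact lt_irrefl _ hdeg
    · obtain ⟨e, -, he0⟩ := Finset.exists_ne_zero_of_sum_ne_zero (by omega : (∑ i, (C i - A i)) ≠ 0)
      have he : A e < C e := by omega
      obtain ⟨d, hd⟩ : ∃ d, C d < A d := by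
        by_contra h
        push_neg at h
        have : edeg A ≤ edeg C := by
          rw [edeg_eq_sum, edeg_eq_sum]
          exact Finset.sum_le_sum fun i _ => h i
        omega
      have hdA : d ∈ A.support := Finsupp.mem_support_iff.mpr (by omega)
      have hde : d ≤ e := hinv e he d hdA
      have hne : d ≠ e := fun h => by rw [h] at hd; omega
      have hdlt : (d : ℕ) < (e : ℕ) := lt_of_le_of_ne (by exact_mod_cast hde) (fun h => hne (Fin.ext h))
      set C' := C + Finsupp.single d 1 - Finsupp.single e 1 with hC'def
      have hC'app : ∀ i, C' i = C i + (if d = i then 1 else 0) - (if e = i then 1 else 0) :=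
        fun i => addsub_apply C d e i
      have hC'mem : monomialMem C' I :=
        borel_move hB ((e : ℕ) - (d : ℕ)) C d e (by omega) (by omega) (by omega) hC
      have hsum : ∀ i, C' i + (if e = i then 1 else 0) = C i + (if d = i then 1 else 0) := by
        intro i
        have hci := hC'app i
        by_cases h1 : d = i <;> by_cases h2 : e = i
        · exact absurd (h1.trans h2.symm) hne
        · rw [if_pos h1] at hci ⊢
          rw [if_neg h2] at hci ⊢
          omega
        · rw [if_neg h1] at hci ⊢
          rw [if_pos h2] at hci ⊢
          subst h2
          omega
        · rw [if_neg h1] at hci ⊢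
          rw [if_neg h2] at hci ⊢
          omega
      have hedeg : (∑ i, C' i) = ∑ i, C i := by
        have h1 : (∑ i, (C' i + (if e = i then 1 else 0)))
            = ∑ i, (C i + (if d = i then 1 else 0)) := Finset.sum_congr rfl fun i _ => hsum i
        rw [Finset.sum_add_distrib, Finset.sum_add_distrib] at h1
        simp [Finset.sum_ite_eq] at h1
        omega
      have hmeas : ∀ i, (C' i - A i) + (if e = i then 1 else 0) = C i - A i := by
        intro i
        have hci := hC'app i
        by_cases h1 : d = i <;> by_cases h2 : e = i
        · exact absurd (h1.trans h2.symm) hne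
        · rw [if_pos h1] at hci
          rw [if_neg h2] at hci ⊢
          subst h1
          omega
        · rw [if_neg h1] at hci
          rw [if_pos h2] at hci ⊢
          subst h2
          omega
        · rw [if_neg h1] at hci
          rw [if_neg h2] at hci ⊢
          omega
      have hE' : (∑ i, (C' i - A i)) + 1 = E := by
        have h1 : (∑ i, ((C' i - A i) + (if e = i then 1 else 0)))
            = ∑ i, (C i - A i) := Finset.sum_congr rfl fun i _ => hmeas i
        rw [Finset.sum_add_distrib] at h1
        simp [Finset.sum_ite_eq] at h1
        omega
      have hdeg' : edeg C' < edeg A := by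
        simp only [edeg_eq_sum] at hdeg ⊢
        omega
      have hinv' : ∀ i, A i < C' i → ∀ j ∈ A.support, j ≤ i := by
        intro i hi j hj
        have hci := hC'app i
        have : A i < C i := by
          by_cases h1 : d = i
          · subst h1
            rw [if_pos rfl, if_neg (fun h => hne h.symm)] at hci
            omega
          · rw [if_neg h1] at hci
            by_cases h2 : e = i
            · rw [if_pos h2] at hci
              omega
            · rw [if_neg h2] at hci
              omega
        exact hinv i this j hj
      exact ih (E - 1) (by omega) C' (by omega) hC'mem hdeg' hinv'

/-- Let `x^A` and `x^B` be minimal generators of a Borel-fixed monomial ideal `I` with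
`|A| > |B|`.  If `x^M · x^A = x^N · x^B` for some monomials `x^M, x^N`, then some `x_i`
with `i < max(A)` divides `x^M`. -/
theorem divisor_below_max_of_borel_fixed
    (n : ℕ) (I : Ideal (MvPolynomial (Fin (n + 1)) ℂ)) (hB : IsBorelFixed I)
    (A B M N : Fin (n + 1) →₀ ℕ)
    (hA : IsMinGenOf A I) (hBgen : IsMinGenOf B I)
    (hdeg : edeg B < edeg A) (heq : M + A = N + B) :
    ∃ i : Fin (n + 1), 0 < M i ∧ ∃ p ∈ A.support, i < p := by
  by_contra hcon
  push_neg at hcon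
  have hMA : ∀ i, M i + A i = N i + B i := by
    intro i
    have := congrArg (fun f : Fin (n + 1) →₀ ℕ => f i) heq
    simpa using this
  have hinv : ∀ i, A i < B i → ∀ j ∈ A.support, j ≤ i := by
    intro i hi j hj
    have hMi : 0 < M i := by have := hMA i; omega
    exact hcon i hMi j hj
  exact key_lemma hB hA (∑ i, (B i - A i)) B rfl hBgen.1 hdeg hinv

end
end
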